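/- arXiv:1702.01277 — 2 statements merged into one kernel-verified Lean document; each statement's English description precedes it below -/
import Mathlib

section
/- Let k ≥ 2 and let G be a k-connected simple graph on a finite vertex set V in which {v,w} is an edge. Let x ∉ V and let N ⊆ V with v, w ∈ N and |N| = k. Then the simple graph on V ∪ {x} whose edges are the edges of G other than {v,w}, together with all pairs {x,u} for u ∈ N, is k-connected. -/
/-- A simple graph on the vertex set `V` is `k`-connected: `V` has more than `k`
vertices, and deleting any set of fewer than `k` vertices leaves a connected graph. -/
def KConnectedOn {α : Type*} (k : ℕ) (V : Set α) (G : SimpleGraph α) : Prop :=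
  k < V.ncard ∧ ∀ C ⊆ V, C.ncard < k → (G.induce (V \ C)).Connected

open SimpleGraph

private lemma aux_reach_del {β : Type*} {Γ : SimpleGraph β} {c d a b : β}
    (p : Γ.Walk a b) (hb : b = c ∨ b = d) :
    (Γ.deleteEdges {s(c, d)}).Reachable a c ∨ (Γ.deleteEdges {s(c, d)}).Reachable a d := by
  induction p with
  | nil =>
    rcases hb with rfl | rfl
    · exact Or.inl (Reachable.refl _)
    · exact Or.inr (Reachable.refl _)
  | @cons u e b h q ih =>
    by_cases he : s(u, e) = s(c, d)
    · rw [Sym2.eq_iff] at he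
      rcases he with ⟨rfl, rfl⟩ | ⟨rfl, rfl⟩
      · exact Or.inl (Reachable.refl _)
      · exact Or.inr (Reachable.refl _)
    · have hadj : (Γ.deleteEdges {s(c, d)}).Adj u e := by
        rw [deleteEdges_adj]
        exact ⟨h, by simpa using he⟩
      rcases ih hb with h' | h'
      · exact Or.inl ((hadj.reachable).trans h')
      · exact Or.inr ((hadj.reachable).trans h')

private lemma aux_exists_adj {β : Type*} {Γ : SimpleGraph β} (h : Γ.Connected)
    (hnt : Nontrivial β) (a : β) : ∃ b, Γ.Adj a b := by
  haveI := hnt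
  obtain ⟨b, hb⟩ := exists_ne a
  obtain ⟨p⟩ := h.preconnected a b
  cases p with
  | nil => exact absurd rfl hb.symm
  | cons hadj q => exact ⟨_, hadj⟩

private lemma aux_singleton_connected {β : Type*} (Γ : SimpleGraph β) (a : β) :
    (Γ.induce {a}).Connected := by
  haveI : Nonempty (({a} : Set β)) := ⟨⟨a, rfl⟩⟩
  refine ⟨?_⟩
  rintro ⟨b, hb⟩ ⟨c, hc⟩
  simp only [Set.mem_singleton_iff] at hb hc
  subst hb; subst hc; rfl

/-- Let `k ≥ 2`, let `G` be `k`-connected with an edge `{v,w}`.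
Removing the edge `{v,w}` and joining a new vertex `x` to `k` vertices including `v`
and `w` yields a `k`-connected graph. -/
theorem statement11 {α : Type*} (k : ℕ) (hk : 2 ≤ k) (V : Set α) (hV : V.Finite)
    (G : SimpleGraph α) (hGV : ∀ e ∈ G.edgeSet, ∀ p ∈ e, p ∈ V)
    (hG : KConnectedOn k V G)
    (v w : α) (hvw : G.Adj v w)
    (x : α) (hx : x ∉ V)
    (N : Set α) (hNV : N ⊆ V) (hv : v ∈ N) (hw : w ∈ N) (hN : N.ncard = k) :
    KConnectedOn k (insert x V)
      (G.deleteEdges {s(v, w)} ⊔ SimpleGraph.fromEdgeSet {e | ∃ u ∈ N, e = s(x, u)}) := by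
  obtain ⟨hcard, hconn⟩ := hG
  have hvV : v ∈ V := hNV hv
  have hwV : w ∈ V := hNV hw
  have hvwne : v ≠ w := hvw.ne
  set H := G.deleteEdges {s(v, w)} ⊔ SimpleGraph.fromEdgeSet {e | ∃ u ∈ N, e = s(x, u)}
    with hHdef
  have hGH : ∀ (s : Set α), (v ∉ s ∨ w ∉ s) → G.induce s ≤ H.induce s := by
    intro s hs a b hab
    have hab' : G.Adj ↑a ↑b := hab
    show H.Adj ↑a ↑b
    refine Or.inl (SimpleGraph.deleteEdges_adj.mpr ⟨hab', ?_⟩)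
    simp only [Set.mem_singleton_iff]
    intro heq
    rw [Sym2.eq_iff] at heq
    rcases heq with ⟨ha2, hb2⟩ | ⟨ha2, hb2⟩
    · rcases hs with h | h
      · exact h (ha2 ▸ a.2)
      · exact h (hb2 ▸ b.2)
    · rcases hs with h | h
      · exact h (hb2 ▸ b.2)
      · exact h (ha2 ▸ a.2)
  have hG'H : ∀ (s : Set α), (G.deleteEdges {s(v, w)}).induce s ≤ H.induce s := by
    intro s a b hab
    have hab' : (G.deleteEdges {s(v, w)}).Adj ↑a ↑b := hab
    show H.Adj ↑a ↑b
    exact Or.inl hab'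
  constructor
  · rw [Set.ncard_insert_of_notMem hx hV]
    omega
  intro C hC hCk
  by_cases hxC : x ∈ C
  · -- Case 1 : x is deleted
    have hCfin : C.Finite := (hV.insert x).subset hC
    set D := C \ {x} with hDdef
    have hDV : D ⊆ V := by
      rintro y ⟨hyC, hyx⟩
      rcases hC hyC with rfl | h
      · exact absurd rfl hyx
      · exact h
    have hDfin : D.Finite := hCfin.diff
    have hDcard : D.ncard = C.ncard - 1 := Set.ncard_diff_singleton_of_mem hxC
    have hC1 : 0 < C.ncard := (Set.ncard_pos hCfin).mpr ⟨x, hxC⟩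
    have hset : (insert x V) \ C = V \ D := by
      ext y
      constructor
      · rintro ⟨hy1, hy2⟩
        rcases hy1 with rfl | hy1
        · exact absurd hxC hy2
        · exact ⟨hy1, fun hyD => hy2 hyD.1⟩
      · rintro ⟨hy1, hy2⟩
        refine ⟨Or.inr hy1, fun hyC => hy2 ⟨hyC, ?_⟩⟩
        rintro rfl
        exact hx hy1
    rw [hset]
    by_cases hvwD : v ∉ D ∧ w ∉ D
    · obtain ⟨hvD, hwD⟩ := hvwD
      -- find a neighbour u of w distinct from v
      have hins_v : insert v D ⊆ V := Set.insert_subset hvV hDV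
      have hins_v_card : (insert v D).ncard < k :=
        lt_of_le_of_lt (Set.ncard_insert_le _ _) (by omega)
      have hconn_v := hconn _ hins_v hins_v_card
      have hnt : Nontrivial ↥(V \ insert v D) := by
        rw [Set.nontrivial_coe_sort]
        have h2 : 1 < (V \ insert v D).ncard := by
          rw [Set.ncard_diff hins_v ((hDfin.insert v))]
          have := Set.ncard_insert_le v D
          omega
        exact (Set.one_lt_ncard hV.diff).mp h2
      have hwmem : w ∈ V \ insert v D := by
        refine ⟨hwV, ?_⟩
        simp only [Set.mem_insert_iff]
        push_neg
        exact ⟨hvwne.symm, hwD⟩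
      obtain ⟨z, hz⟩ := aux_exists_adj hconn_v hnt ⟨w, hwmem⟩
      obtain ⟨u, hu⟩ := z
      have hadj_wu : G.Adj w u := hz
      have huV : u ∈ V := hu.1
      have huv : u ≠ v := fun h => hu.2 (by rw [h]; exact Set.mem_insert _ _)
      have huD : u ∉ D := fun h => hu.2 (Set.mem_insert_of_mem _ h)
      have huw : u ≠ w := Ne.symm hadj_wu.ne
      -- connectivity of G' on V \ D
      have hins_w : insert w D ⊆ V := Set.insert_subset hwV hDV
      have hins_w_card : (insert w D).ncard < k :=
        lt_of_le_of_lt (Set.ncard_insert_le _ _) (by omega)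
      have hle1 : G.induce (V \ insert w D) ≤
          (G.deleteEdges {s(v, w)}).induce (V \ insert w D) := by
        intro a b hab
        have hab' : G.Adj ↑a ↑b := hab
        show (G.deleteEdges {s(v, w)}).Adj ↑a ↑b
        refine SimpleGraph.deleteEdges_adj.mpr ⟨hab', ?_⟩
        simp only [Set.mem_singleton_iff]
        intro heq
        rw [Sym2.eq_iff] at heq
        rcases heq with ⟨ha2, hb2⟩ | ⟨ha2, hb2⟩
        · exact b.2.2 (by rw [hb2]; exact Set.mem_insert _ _)
        · exact a.2.2 (by rw [ha2]; exact Set.mem_insert _ _)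
      have sconn : ((G.deleteEdges {s(v, w)}).induce (V \ insert w D)).Connected :=
        (hconn _ hins_w hins_w_card).mono hle1
      have tconn := aux_singleton_connected (G.deleteEdges {s(v, w)}) w
      have humem : u ∈ V \ insert w D := by
        refine ⟨huV, ?_⟩
        simp only [Set.mem_insert_iff]
        push_neg
        exact ⟨huw, huD⟩
      have hadj' : (G.deleteEdges {s(v, w)}).Adj u w := by
        refine SimpleGraph.deleteEdges_adj.mpr ⟨hadj_wu.symm, ?_⟩
        simp only [Set.mem_singleton_iff]
        intro heq
        rw [Sym2.eq_iff] at heq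
        rcases heq with ⟨ha2, hb2⟩ | ⟨ha2, hb2⟩
        · exact huv ha2
        · exact huw ha2
      have hunion : (V \ insert w D) ∪ {w} = V \ D := by
        ext y
        simp only [Set.mem_union, Set.mem_diff, Set.mem_insert_iff, Set.mem_singleton_iff]
        constructor
        · rintro (⟨hy1, hy2⟩ | rfl)
          · exact ⟨hy1, fun h => hy2 (Or.inr h)⟩
          · exact ⟨hwV, hwD⟩
        · rintro ⟨hy1, hy2⟩
          by_cases hyw : y = w
          · exact Or.inr hyw
          · exact Or.inl ⟨hy1, fun h => by rcases h with h | h; exacts [hyw h, hy2 h]⟩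
      have hfinal : ((G.deleteEdges {s(v, w)}).induce (V \ D)).Connected := by
        rw [← hunion]
        exact connected_induce_union sconn.preconnected tconn.preconnected humem rfl hadj'
      exact hfinal.mono (hG'H _)
    · rw [not_and_or, not_not, not_not] at hvwD
      refine ((hconn D hDV (by omega)).mono (hGH _ ?_))
      rcases hvwD with h | h
      · exact Or.inl (fun hm => hm.2 h)
      · exact Or.inr (fun hm => hm.2 h)
  · -- Case 2 : x survives
    have hCV : C ⊆ V := by
      intro y hy
      rcases hC hy with rfl | h
      · exact absurd hy hxC
      · exact h
    have hCfin : C.Finite := hV.subset hCV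
    have hset : (insert x V) \ C = insert x (V \ C) := Set.insert_diff_of_notMem _ hxC
    rw [hset]
    obtain ⟨u₀, hu₀N, hu₀C⟩ : ∃ u ∈ N, u ∉ C := by
      by_contra h
      push_neg at h
      have := Set.ncard_le_ncard h hCfin
      omega
    have hxadj : ∀ u ∈ N, H.Adj x u := by
      intro u hu
      refine Or.inr ((SimpleGraph.fromEdgeSet_adj _).mpr ⟨⟨u, hu, rfl⟩, ?_⟩)
      rintro rfl
      exact hx (hNV hu)
    have hconnC := hconn C hCV hCk
    have hxS : x ∈ insert x (V \ C) := Set.mem_insert _ _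
    by_cases hvwC : v ∉ C ∧ w ∉ C
    · -- neither v nor w deleted
      rw [connected_iff_exists_forall_reachable]
      refine ⟨⟨x, hxS⟩, ?_⟩
      rintro ⟨y, hy⟩
      rcases Set.mem_insert_iff.mp hy with rfl | hyVC
      · rfl
      · have hvm : v ∈ V \ C := ⟨hvV, hvwC.1⟩
        have hwm : w ∈ V \ C := ⟨hwV, hvwC.2⟩
        obtain ⟨p⟩ := hconnC.preconnected ⟨y, hyVC⟩ ⟨v, hvm⟩
        have hreach := aux_reach_del (c := (⟨v, hvm⟩ : ↥(V \ C))) (d := ⟨w, hwm⟩) p (Or.inl rfl)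
        have hle2 : (G.induce (V \ C)).deleteEdges
            {s((⟨v, hvm⟩ : ↥(V \ C)), ⟨w, hwm⟩)} ≤ H.induce (V \ C) := by
          intro a b hab
          rw [SimpleGraph.deleteEdges_adj] at hab
          obtain ⟨hab1, hab2⟩ := hab
          have h1 : G.Adj ↑a ↑b := hab1
          show H.Adj ↑a ↑b
          refine Or.inl (SimpleGraph.deleteEdges_adj.mpr ⟨h1, ?_⟩)
          simp only [Set.mem_singleton_iff]
          intro heq
          rw [Sym2.eq_iff] at heq
          apply hab2
          simp only [Set.mem_singleton_iff]
          rw [Sym2.eq_iff]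
          rcases heq with ⟨ha2, hb2⟩ | ⟨ha2, hb2⟩
          · exact Or.inl ⟨Subtype.ext ha2, Subtype.ext hb2⟩
          · exact Or.inr ⟨Subtype.ext ha2, Subtype.ext hb2⟩
        have hsub : V \ C ⊆ insert x (V \ C) := Set.subset_insert _ _
        have hmap : ∀ (a b : ↥(V \ C)),
            ((G.induce (V \ C)).deleteEdges
              {s((⟨v, hvm⟩ : ↥(V \ C)), ⟨w, hwm⟩)}).Reachable a b →
            (H.induce (insert x (V \ C))).Reachable ⟨↑a, hsub a.2⟩ ⟨↑b, hsub b.2⟩ := by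
          intro a b hr
          exact ((hr.mono hle2).map (H.induceHomOfLE hsub).toHom)
        have hadjvx : (H.induce (insert x (V \ C))).Adj ⟨v, hsub hvm⟩ ⟨x, hxS⟩ :=
          (hxadj v hv).symm
        have hadjwx : (H.induce (insert x (V \ C))).Adj ⟨w, hsub hwm⟩ ⟨x, hxS⟩ :=
          (hxadj w hw).symm
        rcases hreach with hr | hr
        · exact ((hmap _ _ hr).trans hadjvx.reachable).symm
        · exact ((hmap _ _ hr).trans hadjwx.reachable).symm
    · -- v or w deleted
      rw [not_and_or, not_not, not_not] at hvwC
      have sconn : (H.induce (V \ C)).Connected := by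
        refine hconnC.mono (hGH _ ?_)
        rcases hvwC with h | h
        · exact Or.inl (fun hm => hm.2 h)
        · exact Or.inr (fun hm => hm.2 h)
      have tconn := aux_singleton_connected H x
      have hu₀mem : u₀ ∈ V \ C := ⟨hNV hu₀N, hu₀C⟩
      have hadj0 : H.Adj u₀ x := (hxadj u₀ hu₀N).symm
      rw [← Set.union_singleton]
      exact connected_induce_union sconn.preconnected tconn.preconnected hu₀mem rfl hadj0
end

section
/- Let S be a set of at least 3 points in the plane in general position and let (S,E) be a maximal biplane graph on S. Then there exist triangulations (S,E₁) and (S,E₂) of S such that E = E₁ ∪ E₂. -/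
/-- A point in the plane. -/
abbrev Pt : Type := ℝ × ℝ

/-- A finite point set is in *general position* if no three of its points are collinear. -/
def InGenPos (S : Set Pt) : Prop :=
  ∀ p ∈ S, ∀ q ∈ S, ∀ r ∈ S, p ≠ q → p ≠ r → q ≠ r → ¬ Collinear ℝ ({p, q, r} : Set Pt)

/-- A point set is in *convex position* if no point lies in the convex hull of the others. -/
def InConvexPos (S : Set Pt) : Prop :=
  ∀ p ∈ S, p ∉ convexHull ℝ (S \ {p})

/-- `E` is a set of unordered pairs of distinct points of `S`. -/
def IsEdgeSetOn (S : Set Pt) (E : Set (Sym2 Pt)) : Prop :=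
  ∀ e ∈ E, ¬ e.IsDiag ∧ ∀ p ∈ e, p ∈ S

/-- The open segment spanned by an unordered pair of points. -/
def openSeg : Sym2 Pt → Set Pt :=
  Sym2.lift ⟨fun a b => openSegment ℝ a b, fun a b => openSegment_symm ℝ a b⟩

/-- Two edges *cross* if their open segments intersect. -/
def Cross (e f : Sym2 Pt) : Prop := (openSeg e ∩ openSeg f).Nonempty

/-- A *plane graph* on `S`: a geometric graph whose edges are pairwise noncrossing. -/
def IsPlaneGraph (S : Set Pt) (E : Set (Sym2 Pt)) : Prop :=
  IsEdgeSetOn S E ∧ ∀ e ∈ E, ∀ f ∈ E, e ≠ f → ¬ Cross e f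

/-- A *biplane graph* on `S`: the edge set splits into two plane graphs. -/
def IsBiplaneGraph (S : Set Pt) (E : Set (Sym2 Pt)) : Prop :=
  IsEdgeSetOn S E ∧ ∃ E₁ E₂ : Set (Sym2 Pt), E = E₁ ∪ E₂ ∧
    IsPlaneGraph S E₁ ∧ IsPlaneGraph S E₂

/-- The geometric graph `(S, E)` is `k`-connected: more than `k` vertices, and deleting
any fewer than `k` vertices leaves a connected graph. -/
def KConnected (k : ℕ) (S : Set Pt) (E : Set (Sym2 Pt)) : Prop :=
  k < S.ncard ∧ ∀ C ⊆ S, C.ncard < k →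
    ((SimpleGraph.fromEdgeSet E).induce (S \ C)).Connected

/-- A *triangulation* of `S`: an edge-maximal plane graph on `S`. -/
def IsTriangulation (S : Set Pt) (E : Set (Sym2 Pt)) : Prop :=
  IsPlaneGraph S E ∧ ∀ p ∈ S, ∀ q ∈ S, p ≠ q → s(p, q) ∉ E →
    ¬ IsPlaneGraph S (insert s(p, q) E)

/-- `{u,v}` is a *hull edge* of `S`: all other points of `S` lie strictly on one side
of the line through `u` and `v`. -/
def IsHullEdge (S : Set Pt) (u v : Pt) : Prop :=
  u ≠ v ∧ ((∀ p ∈ S \ {u, v},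
      0 < (v.1 - u.1) * (p.2 - u.2) - (v.2 - u.2) * (p.1 - u.1)) ∨
    (∀ p ∈ S \ {u, v},
      (v.1 - u.1) * (p.2 - u.2) - (v.2 - u.2) * (p.1 - u.1) < 0))

/-- A *fan* on a set `S` of at least 3 points in convex position. -/
def IsFan (S : Set Pt) (E : Set (Sym2 Pt)) : Prop :=
  InConvexPos S ∧ 3 ≤ S.ncard ∧ ∃ v₀ ∈ S,
    E = {e | ∃ u ∈ S, ∃ v ∈ S, e = s(u, v) ∧ IsHullEdge S u v} ∪
        {e | ∃ p ∈ S, p ≠ v₀ ∧ e = s(v₀, p)}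

/-- A *wheel*: one point in the interior of the convex hull, joined to all other points,
which are in convex position and joined along the hull. -/
def IsWheel (S : Set Pt) (E : Set (Sym2 Pt)) : Prop :=
  ∃ c ∈ S, c ∈ interior (convexHull ℝ S) ∧
    (∀ p ∈ S, p ∈ interior (convexHull ℝ S) → p = c) ∧
    InConvexPos (S \ {c}) ∧
    E = {e | ∃ u ∈ S, ∃ v ∈ S, e = s(u, v) ∧ IsHullEdge S u v} ∪
        {e | ∃ p ∈ S, p ≠ c ∧ e = s(c, p)}

/-- `{u,v,w}` is a *triangle* of the triangulation `(S,E)`. -/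
def IsTriangleOf (S : Set Pt) (E : Set (Sym2 Pt)) (u v w : Pt) : Prop :=
  u ≠ v ∧ u ≠ w ∧ v ≠ w ∧ s(u, v) ∈ E ∧ s(v, w) ∈ E ∧ s(u, w) ∈ E ∧
  ∀ p ∈ S, p ∉ interior (convexHull ℝ ({u, v, w} : Set Pt))

/-- The edge `{u,v}` is *flippable* in the triangulation `(S,E)`. -/
def Flippable (S : Set Pt) (E : Set (Sym2 Pt)) (u v : Pt) : Prop :=
  s(u, v) ∈ E ∧ ∃ w ∈ S, ∃ x ∈ S, IsTriangleOf S E u v w ∧ IsTriangleOf S E u v x ∧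
    (openSegment ℝ u v ∩ openSegment ℝ w x).Nonempty

/-- A biplane graph is *maximal* if no proper edge-superset is biplane. -/
def IsMaximalBiplane (S : Set Pt) (E : Set (Sym2 Pt)) : Prop :=
  IsBiplaneGraph S E ∧ ∀ E'' : Set (Sym2 Pt), IsBiplaneGraph S E'' → ¬ E ⊂ E''

/-- Any plane graph on a finite set extends to a triangulation. -/
lemma extend_to_triangulation (S : Set Pt) (hfin : S.Finite) (E₀ : Set (Sym2 Pt))
    (h₀ : IsPlaneGraph S E₀) : ∃ T, IsTriangulation S T ∧ E₀ ⊆ T := by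
  set K : Set (Sym2 Pt) := (fun x : Pt × Pt => Sym2.mk x.1 x.2) '' (S ×ˢ S) with hK
  have hKfin : K.Finite := ((hfin.prod hfin).image _)
  have hsub : ∀ E' : Set (Sym2 Pt), IsPlaneGraph S E' → E' ⊆ K := by
    intro E' hE' e he
    induction e using Sym2.inductionOn with
    | hf a b =>
      exact ⟨(a, b), ⟨(hE'.1 _ he).2 a (by simp), (hE'.1 _ he).2 b (by simp)⟩, rfl⟩
  set F : Set (Set (Sym2 Pt)) := {E' | IsPlaneGraph S E' ∧ E₀ ⊆ E'} with hF
  have hFfin : F.Finite := by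
    apply hKfin.finite_subsets.subset
    intro E' hE'
    exact hsub E' hE'.1
  obtain ⟨M, hM, hmax⟩ := hFfin.exists_maximalFor id F ⟨E₀, h₀, subset_rfl⟩
  refine ⟨M, ⟨hM.1, ?_⟩, hM.2⟩
  intro p hp q hq hpq hnotin hplane
  have hmem : insert s(p, q) M ∈ F := ⟨hplane, hM.2.trans (Set.subset_insert _ _)⟩
  have := hmax hmem (Set.subset_insert _ _)
  simp only [id] at this
  exact hnotin (this (Set.mem_insert _ _))

/-- Every maximal biplane graph on at least 3 points in general
position is the union of two triangulations. -/
theorem statement12 (S : Set Pt) (hfin : S.Finite) (hcard : 3 ≤ S.ncard)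
    (hgen : InGenPos S) (E : Set (Sym2 Pt)) (hmax : IsMaximalBiplane S E) :
    ∃ E₁ E₂ : Set (Sym2 Pt), IsTriangulation S E₁ ∧ IsTriangulation S E₂ ∧
      E = E₁ ∪ E₂ := by
  obtain ⟨⟨hES, F₁, F₂, hEeq, hP₁, hP₂⟩, hmaxi⟩ := hmax
  obtain ⟨T₁, hT₁, hsub₁⟩ := extend_to_triangulation S hfin F₁ hP₁
  obtain ⟨T₂, hT₂, hsub₂⟩ := extend_to_triangulation S hfin F₂ hP₂
  have hEsub : E ⊆ T₁ ∪ T₂ := hEeq ▸ Set.union_subset_union hsub₁ hsub₂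
  have hbip : IsBiplaneGraph S (T₁ ∪ T₂) := by
    refine ⟨?_, T₁, T₂, rfl, hT₁.1, hT₂.1⟩
    intro e he
    rcases he with he | he
    · exact hT₁.1.1 e he
    · exact hT₂.1.1 e he
  have := hmaxi _ hbip
  have hEq : E = T₁ ∪ T₂ := by
    by_contra h
    exact this ⟨hEsub, fun hle => h (le_antisymm hEsub hle)⟩
  exact ⟨T₁, T₂, hT₁, hT₂, hEq⟩
end
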